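/- arXiv:2309.06985 — 2 statements merged into one kernel-verified Lean document; each statement's English description precedes it below -/
import Mathlib

section
/- The compositional precision and covariance matrices satisfy Σ_c Ω_c = G, where G = I_p − p^{-1} 1_p 1_pᵀ. -/
open Matrix

noncomputable section

/-- The all-ones vector in `ℝ^p`. -/
def onesV (p : ℕ) : Fin p → ℝ := fun _ => 1

/-- The centering matrix `G = I_p − p⁻¹ 1_p 1_pᵀ`. -/
def Gmat (p : ℕ) : Matrix (Fin p) (Fin p) ℝ :=
  1 - (p : ℝ)⁻¹ • Matrix.vecMulVec (onesV p) (onesV p)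

/-- The compositional precision matrix `Ω_c = Ω₀ − Ω₀ 1_p 1_pᵀ Ω₀ / (1_pᵀ Ω₀ 1_p)`. -/
def OmegaC {p : ℕ} (Ω : Matrix (Fin p) (Fin p) ℝ) : Matrix (Fin p) (Fin p) ℝ :=
  Ω - (onesV p ⬝ᵥ Ω.mulVec (onesV p))⁻¹ •
    Matrix.vecMulVec (Ω.mulVec (onesV p)) (Matrix.vecMul (onesV p) Ω)

/-- The centered log-ratio covariance matrix `Σ_c = G Σ₀ G` with `Σ₀ = Ω₀⁻¹`. -/
def SigmaC {p : ℕ} (Ω : Matrix (Fin p) (Fin p) ℝ) : Matrix (Fin p) (Fin p) ℝ :=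
  Gmat p * Ω⁻¹ * Gmat p

/-- The entrywise `ℓ∞`-norm `‖A‖_max = max_{i,j} |a_ij|`. -/
def maxNorm {p : ℕ} (A : Matrix (Fin p) (Fin p) ℝ) : ℝ := ⨆ i, ⨆ j, |A i j|

/-- The matrix `ℓ1`-norm `‖A‖_{L1} = max_j Σ_i |a_ij|`. -/
def l1Norm {p : ℕ} (A : Matrix (Fin p) (Fin p) ℝ) : ℝ := ⨆ j, ∑ i, |A i j|

/- Left multiplication by the centering matrix `G` kills `1_p`, right multiplication by `Ω_c` kills
`1_pᵀ`, and `Σ₀ Ω_c = I − c⁻¹ 1_p 1_pᵀ Ω₀` with `c = 1_pᵀ Ω₀ 1_p`. Hence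
`G Σ₀ G Ω_c = G Σ₀ Ω_c = G (I − c⁻¹ 1_p 1_pᵀ Ω₀) = G`. -/

section RankOne

variable {n K : Type*} [Fintype n]

lemma vecMul_sub_inv_smul_vecMulVec_eq_zero [Field K] (A : Matrix n n K) (v : n → K)
    (hv : v ⬝ᵥ A *ᵥ v ≠ 0) :
    v ᵥ* (A - (v ⬝ᵥ A *ᵥ v)⁻¹ • vecMulVec (A *ᵥ v) (v ᵥ* A)) = 0 := by
  rw [vecMul_sub, vecMul_smul, vecMul_vecMulVec, smul_smul, inv_mul_cancel₀ hv, one_smul,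
    sub_self]

variable [DecidableEq n] [CommRing K]

lemma nonsing_inv_mul_sub_smul_vecMulVec (A : Matrix n n K) (hA : IsUnit A.det) (s : K)
    (u w : n → K) :
    A⁻¹ * (A - s • vecMulVec (A *ᵥ u) w) = 1 - s • vecMulVec u w := by
  rw [mul_sub, nonsing_inv_mul _ hA, mul_smul_comm, mul_vecMulVec, mulVec_mulVec,
    nonsing_inv_mul _ hA, one_mulVec]

lemma one_sub_smul_vecMulVec_mul_of_vecMul_eq_zero (s : K) (u v : n → K) (B : Matrix n n K)
    (hB : v ᵥ* B = 0) :
    (1 - s • vecMulVec u v) * B = B := by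
  rw [sub_mul, one_mul, smul_mul_assoc, vecMulVec_mul, hB, vecMulVec_zero, smul_zero, sub_zero]

lemma mul_one_sub_smul_vecMulVec_of_mulVec_eq_zero (B : Matrix n n K) (s : K) (u w : n → K)
    (hB : B *ᵥ u = 0) :
    B * (1 - s • vecMulVec u w) = B := by
  rw [mul_sub, mul_one, mul_smul_comm, mul_vecMulVec, hB, zero_vecMulVec, smul_zero, sub_zero]

end RankOne

lemma onesV_ne_zero {p : ℕ} (hp : 0 < p) : onesV p ≠ 0 :=
  fun h => one_ne_zero (congrFun h ⟨0, hp⟩)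

lemma Gmat_mulVec_onesV (p : ℕ) : Gmat p *ᵥ onesV p = 0 := by
  rw [Gmat, sub_mulVec, one_mulVec, smul_mulVec, vecMulVec_mulVec]
  ext i
  have hp : (p : ℝ) ≠ 0 := Nat.cast_ne_zero.mpr (Fin.pos i).ne'
  simp [onesV, dotProduct, hp]

lemma onesV_vecMul_OmegaC {p : ℕ} (hp : 0 < p) {Ω : Matrix (Fin p) (Fin p) ℝ} (hΩ : Ω.PosDef) :
    onesV p ᵥ* OmegaC Ω = 0 :=
  vecMul_sub_inv_smul_vecMulVec_eq_zero Ω _ (hΩ.dotProduct_mulVec_pos (onesV_ne_zero hp)).ne'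

theorem sigmaC_mul_omegaC_eq_G_general (p : ℕ)
    (Ω₀ : Matrix (Fin p) (Fin p) ℝ) (hΩ₀ : Ω₀.PosDef) :
    SigmaC Ω₀ * OmegaC Ω₀ = Gmat p := by
  rcases p.eq_zero_or_pos with rfl | hp
  · exact Subsingleton.elim _ _
  have hGΩ : Gmat p * OmegaC Ω₀ = OmegaC Ω₀ :=
    one_sub_smul_vecMulVec_mul_of_vecMul_eq_zero _ _ _ _ (onesV_vecMul_OmegaC hp hΩ₀)
  calc SigmaC Ω₀ * OmegaC Ω₀ = Gmat p * (Ω₀⁻¹ * OmegaC Ω₀) := by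
        rw [SigmaC, Matrix.mul_assoc, hGΩ, Matrix.mul_assoc]
    _ = Gmat p * (1 - (onesV p ⬝ᵥ Ω₀ *ᵥ onesV p)⁻¹ • vecMulVec (onesV p) (onesV p ᵥ* Ω₀)) := by
        rw [OmegaC, nonsing_inv_mul_sub_smul_vecMulVec _ hΩ₀.det_pos.ne'.isUnit]
    _ = Gmat p := mul_one_sub_smul_vecMulVec_of_mulVec_eq_zero _ _ _ _ (Gmat_mulVec_onesV p)

/-- `Σ_c Ω_c = G`. -/
theorem sigmaC_mul_omegaC_eq_G (p : ℕ) (hp : 2 ≤ p)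
    (Ω₀ : Matrix (Fin p) (Fin p) ℝ) (hΩ₀ : Ω₀.PosDef) :
    SigmaC Ω₀ * OmegaC Ω₀ = Gmat p :=
  sigmaC_mul_omegaC_eq_G_general p Ω₀ hΩ₀

end
end

section
/- Suppose R > 1, the eigenvalues of Ω₀ all lie in the interval [1/R, R], and ‖Ω₀‖_{L1} ≤ M_p. Then the population-level feasibility error satisfies ‖Σ_c Ω₀ − G‖_max ≤ R² M_p / √p. -/
/-!
Because `Σ₀ Ω₀ = I` and `G Ω₀ = Ω₀ − p⁻¹ 1 (1ᵀ Ω₀)`, the error `Σ_c Ω₀ − G` is the rank-one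
matrix `−p⁻¹ (G Σ₀ 1)(1ᵀ Ω₀)`. The entries of `1ᵀ Ω₀` are column sums of `Ω₀`, bounded by
`‖Ω₀‖_{L1} ≤ M`. For `v = Σ₀ 1`, the eigenvalue bound and Cauchy–Schwarz give
`R⁻¹ ‖v‖² ≤ vᵀ Ω₀ v = vᵀ 1 ≤ √p ‖v‖`, and centering is an orthogonal projection, so every entry
of `G v` is at most `‖v‖ ≤ R √p`. Each entry of the error is therefore at most
`R M / √p ≤ R² M / √p`.
-/

open Matrix

noncomputable section

theorem sq_apply_le_dotProduct_self {n : Type*} [Fintype n] (v : n → ℝ) (i : n) :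
    v i ^ 2 ≤ v ⬝ᵥ v := by
  simpa only [dotProduct, sq] using
    Finset.single_le_sum (f := fun k => v k * v k) (fun k _ => mul_self_nonneg _)
      (Finset.mem_univ i)

open scoped MatrixOrder in
theorem Matrix.IsHermitian.mul_dotProduct_self_le_dotProduct_mulVec {n : Type*} [Fintype n]
    [DecidableEq n] {A : Matrix n n ℝ} (hA : A.IsHermitian) {c : ℝ}
    (hc : ∀ i, c ≤ hA.eigenvalues i) (v : n → ℝ) :
    c * (v ⬝ᵥ v) ≤ v ⬝ᵥ A *ᵥ v := by
  have hcA : algebraMap ℝ _ c ≤ A := by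
    rw [algebraMap_le_iff_le_spectrum (a := A) hA.isSelfAdjoint,
      hA.spectrum_real_eq_range_eigenvalues]
    rintro _ ⟨i, rfl⟩
    exact hc i
  simpa only [star_trivial, Algebra.algebraMap_eq_smul_one, sub_mulVec, smul_mulVec, one_mulVec,
    dotProduct_sub, dotProduct_smul, smul_eq_mul, sub_nonneg] using
    (Matrix.le_iff.mp hcA).dotProduct_mulVec_nonneg v

theorem sq_mul_dotProduct_self_le_of_mul_le_dotProduct {n : Type*} [Fintype n] {c : ℝ}
    (hc : 0 ≤ c) {v b : n → ℝ} (h : c * (v ⬝ᵥ v) ≤ v ⬝ᵥ b) :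
    c ^ 2 * (v ⬝ᵥ v) ≤ b ⬝ᵥ b := by
  have hcs : (v ⬝ᵥ b) ^ 2 ≤ (v ⬝ᵥ v) * (b ⬝ᵥ b) := by
    simpa only [dotProduct, sq] using Finset.sum_mul_sq_le_sq_mul_sq Finset.univ v b
  have hv : 0 ≤ v ⬝ᵥ v := by simpa using dotProduct_star_self_nonneg v
  have hb : 0 ≤ b ⬝ᵥ b := by simpa using dotProduct_star_self_nonneg b
  have hsq : (c * (v ⬝ᵥ v)) ^ 2 ≤ (v ⬝ᵥ v) * (b ⬝ᵥ b) :=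
    (pow_le_pow_left₀ (mul_nonneg hc hv) h 2).trans hcs
  rcases hv.eq_or_lt with hv0 | hvpos
  · simpa [← hv0] using hb
  · exact le_of_mul_le_mul_left (by linarith) hvpos

theorem Matrix.IsHermitian.sq_mul_dotProduct_inv_mulVec_self_le {n : Type*} [Fintype n]
    [DecidableEq n] {A : Matrix n n ℝ} (hA : A.IsHermitian) {c : ℝ} (hc₀ : 0 < c)
    (hc : ∀ i, c ≤ hA.eigenvalues i) (b : n → ℝ) :
    c ^ 2 * (A⁻¹ *ᵥ b ⬝ᵥ A⁻¹ *ᵥ b) ≤ b ⬝ᵥ b := by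
  have hdet : IsUnit A.det := by
    rw [hA.det_eq_prod_eigenvalues, isUnit_iff_ne_zero]
    exact Finset.prod_ne_zero_iff.mpr fun i _ => (hc₀.trans_le (hc i)).ne'
  refine sq_mul_dotProduct_self_le_of_mul_le_dotProduct hc₀.le ?_
  simpa [mulVec_mulVec, mul_nonsing_inv _ hdet] using
    hA.mul_dotProduct_self_le_dotProduct_mulVec hc (A⁻¹ *ᵥ b)

theorem Gmat_mulVec_apply {p : ℕ} (v : Fin p → ℝ) (i : Fin p) :
    (Gmat p *ᵥ v) i = v i - (p : ℝ)⁻¹ * ∑ k, v k := by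
  simp [Gmat, sub_mulVec, smul_mulVec, vecMulVec_mulVec, onesV, dotProduct]

theorem dotProduct_self_Gmat_mulVec {p : ℕ} (v : Fin p → ℝ) :
    Gmat p *ᵥ v ⬝ᵥ Gmat p *ᵥ v = v ⬝ᵥ v - (p : ℝ)⁻¹ * (∑ k, v k) ^ 2 := by
  rcases Nat.eq_zero_or_pos p with rfl | hp
  · simp
  have hp' : (p : ℝ) ≠ 0 := by positivity
  set m := (p : ℝ)⁻¹ * ∑ k, v k with hm
  have hexpand : ∀ k, (v k - m) * (v k - m) = v k * v k - 2 * m * v k + m ^ 2 := fun k => by ring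
  simp only [dotProduct, Gmat_mulVec_apply, ← hm, hexpand, Finset.sum_add_distrib,
    Finset.sum_sub_distrib, ← Finset.mul_sum, Finset.sum_const, Finset.card_univ,
    Fintype.card_fin, nsmul_eq_mul]
  rw [hm]
  field_simp
  ring

theorem dotProduct_self_Gmat_mulVec_le {p : ℕ} (v : Fin p → ℝ) :
    Gmat p *ᵥ v ⬝ᵥ Gmat p *ᵥ v ≤ v ⬝ᵥ v := by
  rw [dotProduct_self_Gmat_mulVec]
  have : 0 ≤ (p : ℝ)⁻¹ * (∑ k, v k) ^ 2 := by positivity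
  linarith

theorem abs_Gmat_mulVec_apply_le {p : ℕ} (v : Fin p → ℝ) (i : Fin p) :
    |(Gmat p *ᵥ v) i| ≤ √(v ⬝ᵥ v) :=
  Real.abs_le_sqrt ((sq_apply_le_dotProduct_self _ i).trans (dotProduct_self_Gmat_mulVec_le v))

theorem SigmaC_mul_sub_Gmat {p : ℕ} {Ω : Matrix (Fin p) (Fin p) ℝ} (hΩ : IsUnit Ω.det) :
    SigmaC Ω * Ω - Gmat p =
      -(p : ℝ)⁻¹ • vecMulVec (Gmat p *ᵥ Ω⁻¹ *ᵥ onesV p) (onesV p ᵥ* Ω) := by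
  have hGΩ : Gmat p * Ω = Ω - (p : ℝ)⁻¹ • vecMulVec (onesV p) (onesV p ᵥ* Ω) := by
    rw [Gmat, Matrix.sub_mul, one_mul, Matrix.smul_mul, vecMulVec_mul]
  rw [SigmaC, mul_assoc, hGΩ, Matrix.mul_sub, Matrix.mul_smul,
    nonsing_inv_mul_cancel_right _ _ hΩ, mul_vecMulVec, ← mulVec_mulVec, sub_sub_cancel_left,
    neg_smul]

theorem abs_ones_vecMul_apply_le_l1Norm {p : ℕ} (A : Matrix (Fin p) (Fin p) ℝ) (j : Fin p) :
    |(onesV p ᵥ* A) j| ≤ l1Norm A := by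
  calc |(onesV p ᵥ* A) j| = |∑ i, A i j| := by simp [vecMul, dotProduct, onesV]
    _ ≤ ∑ i, |A i j| := Finset.abs_sum_le_sum_abs _ _
    _ ≤ l1Norm A := le_ciSup (f := fun j => ∑ i, |A i j|) (Set.finite_range _).bddAbove j

theorem l1Norm_nonneg {p : ℕ} (A : Matrix (Fin p) (Fin p) ℝ) : 0 ≤ l1Norm A :=
  Real.iSup_nonneg fun _ => Finset.sum_nonneg fun _ _ => abs_nonneg _

theorem maxNorm_le {p : ℕ} {A : Matrix (Fin p) (Fin p) ℝ} {c : ℝ} (h : ∀ i j, |A i j| ≤ c)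
    (hc : 0 ≤ c) : maxNorm A ≤ c :=
  Real.iSup_le (fun i => Real.iSup_le (h i) hc) hc

theorem Matrix.IsHermitian.mul_abs_Gmat_mulVec_inv_mulVec_ones_le {p : ℕ}
    {A : Matrix (Fin p) (Fin p) ℝ} (hA : A.IsHermitian) {c : ℝ} (hc₀ : 0 < c)
    (hc : ∀ i, c ≤ hA.eigenvalues i) (i : Fin p) :
    c * |(Gmat p *ᵥ A⁻¹ *ᵥ onesV p) i| ≤ √p := by
  have hones : onesV p ⬝ᵥ onesV p = p := by simp [onesV, dotProduct]
  calc c * |(Gmat p *ᵥ A⁻¹ *ᵥ onesV p) i|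
      ≤ √(c ^ 2) * √(A⁻¹ *ᵥ onesV p ⬝ᵥ A⁻¹ *ᵥ onesV p) := by
        rw [Real.sqrt_sq hc₀.le]
        exact mul_le_mul_of_nonneg_left (abs_Gmat_mulVec_apply_le _ i) hc₀.le
    _ ≤ √p := by
        rw [← Real.sqrt_mul (sq_nonneg c), ← hones]
        exact Real.sqrt_le_sqrt (hA.sq_mul_dotProduct_inv_mulVec_self_le hc₀ hc _)

theorem population_feasibility_error_bound_general (p : ℕ)
    (Ω₀ : Matrix (Fin p) (Fin p) ℝ) (hΩ₀ : Ω₀.PosDef) (R M : ℝ) (hR : 1 < R)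
    (heig : ∀ i, hΩ₀.isHermitian.eigenvalues i ∈ Set.Icc R⁻¹ R)
    (hL1 : l1Norm Ω₀ ≤ M) :
    maxNorm (SigmaC Ω₀ * Ω₀ - Gmat p) ≤ R ^ 2 * M / Real.sqrt p := by
  have hR₀ : 0 < R := one_pos.trans hR
  have hM : 0 ≤ M := (l1Norm_nonneg Ω₀).trans hL1
  rw [SigmaC_mul_sub_Gmat ((isUnit_iff_isUnit_det _).mp hΩ₀.isUnit)]
  refine maxNorm_le (fun i j => ?_) (by positivity)
  set u := Gmat p *ᵥ Ω₀⁻¹ *ᵥ onesV p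
  have hp : (0 : ℝ) < p := Nat.cast_pos.mpr i.pos
  have hu : |u i| ≤ R * √p := by
    have := hΩ₀.isHermitian.mul_abs_Gmat_mulVec_inv_mulVec_ones_le (inv_pos.mpr hR₀)
      (fun k => (heig k).1) i
    rwa [inv_mul_le_iff₀ hR₀] at this
  calc |(-(p : ℝ)⁻¹ • vecMulVec u (onesV p ᵥ* Ω₀)) i j|
      = |u i| * |(onesV p ᵥ* Ω₀) j| / p := by
        simp [vecMulVec_apply, abs_mul, div_eq_inv_mul]
    _ ≤ R * √p * M / p := by
        gcongr
        exact (abs_ones_vecMul_apply_le_l1Norm Ω₀ j).trans hL1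
    _ = R * M / √p := by
        have hsqrt : √(p : ℝ) ≠ 0 := (Real.sqrt_pos.mpr hp).ne'
        field_simp
        rw [Real.sq_sqrt hp.le, mul_comm]
    _ ≤ R ^ 2 * M / √p := by
        gcongr
        nlinarith

/-- if the eigenvalues of `Ω₀` lie in `[1/R, R]` and `‖Ω₀‖_{L1} ≤ M_p`,
then `‖Σ_c Ω₀ − G‖_max ≤ R² M_p/√p`. -/
theorem population_feasibility_error_bound (p : ℕ) (hp : 2 ≤ p)
    (Ω₀ : Matrix (Fin p) (Fin p) ℝ) (hΩ₀ : Ω₀.PosDef) (R M : ℝ) (hR : 1 < R) (hM : 0 < M)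
    (heig : ∀ i, hΩ₀.isHermitian.eigenvalues i ∈ Set.Icc R⁻¹ R)
    (hL1 : l1Norm Ω₀ ≤ M) :
    maxNorm (SigmaC Ω₀ * Ω₀ - Gmat p) ≤ R ^ 2 * M / Real.sqrt p :=
  population_feasibility_error_bound_general p Ω₀ hΩ₀ R M hR heig hL1

end
end
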